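/- arXiv:1507.06755 — 3 statements merged into one kernel-verified Lean document; each statement's English description precedes it below -/
import Mathlib

section
/- If λ ∈ Γ_m (i.e. S_1(λ) > 0, …, S_m(λ) > 0 for the elementary symmetric polynomials S_k in n variables), then for every k with k + t ≤ m and every subset {i_1,…,i_t} ⊆ {1,…,n}, the restricted symmetric function S_{k;i_1…i_t}(λ) := S_k(λ)|_{λ_{i_1}=⋯=λ_{i_t}=0} is positive. -/
open Finset

/-- The k-th elementary symmetric polynomial of n real variables. -/
noncomputable def S (n : ℕ) (k : ℕ) (lam : Fin n → ℝ) : ℝ :=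
  ∑ A ∈ Finset.powersetCard k (Finset.univ : Finset (Fin n)), ∏ i ∈ A, lam i

/-- The Gårding cone Γ_m. -/
def GammaCone (n m : ℕ) : Set (Fin n → ℝ) :=
  {lam | ∀ k, 1 ≤ k → k ≤ m → 0 < S n k lam}

/-- Restricted elementary symmetric polynomial: the k-th elementary symmetric
polynomial of the variables with indices in T. -/
noncomputable def SRes (n : ℕ) (T : Finset (Fin n)) (k : ℕ) (lam : Fin n → ℝ) : ℝ :=
  ∑ A ∈ Finset.powersetCard k T, ∏ i ∈ A, lam i

/-!
For a multiset `s` of reals, the monic polynomial `∏ (X + r)` is real-rooted, and so are all its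
derivatives (Rolle). Evaluating at `0` the `j`-th derivative and the two following ones gives
factorial multiples of `e_{k+2}, e_{k+1}, e_k`, so the inequality `q q'' ≤ q'²` for real-rooted `q`
yields Newton's inequality; in particular `e_{k+1} = 0` forces `e_k e_{k+2} ≤ 0`.

To drop a variable `a` from `a ::ₘ s`, argue by induction on `k`: if `e_{k+1}(s) ≤ 0` while the
lower `e_j(s)` are positive, replace `a` by the value `t < a` for which `e_{k+1}(t ::ₘ s) = 0`.
Since `e_j(t ::ₘ s) = e_j(s) + t e_{j-1}(s)` is affine in `t`, its neighbours `e_k` and `e_{k+2}`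
stay positive, contradicting Newton's inequality. Dropping the variables of `I` one by one proves
the theorem.
-/

open Polynomial

namespace Polynomial

theorem eval_multiset_prod_X_sub_C_mul_eval_derivative_derivative_le (s : Multiset ℝ) (x : ℝ) :
    let q := (s.map (X - C ·)).prod
    q.eval x * (derivative (derivative q)).eval x ≤ ((derivative q).eval x) ^ 2 := by
  induction s using Multiset.induction_on with
  | empty => simp
  | cons r s ih =>
    simp only [Multiset.map_cons, Multiset.prod_cons, derivative_mul, derivative_sub,
      derivative_X, derivative_C, sub_zero, one_mul, derivative_add, eval_add, eval_mul,
      eval_sub, eval_X, eval_C] at ih ⊢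
    -- `D(p) := p'² - p p''` at `x` satisfies `D((X - r) q) = q(x)² + (x - r)² D(q)`
    nlinarith [sq_nonneg ((s.map (X - C ·)).prod.eval x),
      mul_nonneg (sq_nonneg (x - r)) (sub_nonneg.mpr ih)]

theorem Splits.eval_mul_eval_derivative_derivative_le {q : ℝ[X]} (hq : Splits q) (x : ℝ) :
    q.eval x * (derivative (derivative q)).eval x ≤ ((derivative q).eval x) ^ 2 := by
  rw [hq.eq_prod_roots]
  simp only [derivative_C_mul, eval_mul, eval_C]
  nlinarith [eval_multiset_prod_X_sub_C_mul_eval_derivative_derivative_le q.roots x,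
    sq_nonneg q.leadingCoeff]

theorem Splits.derivative_of_real {p : ℝ[X]} (hp : Splits p) : Splits (derivative p) := by
  rw [splits_iff_card_roots] at hp ⊢
  have h_rolle := card_roots_le_derivative p
  have h_card := card_roots' (derivative p)
  have h_deg := natDegree_derivative_le p
  omega

theorem Splits.iterate_derivative_of_real {p : ℝ[X]} (hp : Splits p) (j : ℕ) :
    Splits (derivative^[j] p) := by
  induction j with
  | zero => exact hp
  | succ j ih => simpa only [Function.iterate_succ_apply'] using ih.derivative_of_real

end Polynomial

namespace Multiset

section CommSemiring

variable {R : Type*} [CommSemiring R]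

@[simp]
theorem esymm_zero (s : Multiset R) : s.esymm 0 = 1 := by
  simp [esymm]

theorem esymm_cons_succ (a : R) (s : Multiset R) (k : ℕ) :
    (a ::ₘ s).esymm (k + 1) = s.esymm (k + 1) + a * s.esymm k := by
  simp [esymm, powersetCard_cons, map_map, sum_map_mul_left]

theorem esymm_eq_zero_of_card_lt (s : Multiset R) {k : ℕ} (hk : card s < k) : s.esymm k = 0 := by
  simp [esymm, powersetCard_eq_empty k hk]

theorem eval_zero_iterate_derivative_prod_X_add_C (s : Multiset R) {j : ℕ} (hj : j ≤ card s) :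
    (derivative^[j] (s.map (X + C ·)).prod).eval 0 = j.factorial * s.esymm (card s - j) := by
  rw [← coeff_zero_eq_eval_zero, coeff_iterate_derivative, zero_add, Nat.descFactorial_self,
    prod_X_add_C_coeff s hj, nsmul_eq_mul]

end CommSemiring

theorem factorial_mul_esymm_mul_esymm_le (s : Multiset ℝ) {j k : ℕ} (h : card s = j + k + 2) :
    j.factorial * (j + 2).factorial * (s.esymm k * s.esymm (k + 2)) ≤
      (j + 1).factorial ^ 2 * s.esymm (k + 1) ^ 2 := by
  have hP : Splits (s.map (X + C ·)).prod := Splits.multisetProd fun f hf => by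
    obtain ⟨r, -, rfl⟩ := mem_map.mp hf
    exact Splits.X_add_C r
  have key := (hP.iterate_derivative_of_real j).eval_mul_eval_derivative_derivative_le 0
  rw [← Function.iterate_succ_apply' derivative, ← Function.iterate_succ_apply' derivative,
    eval_zero_iterate_derivative_prod_X_add_C s (by omega),
    eval_zero_iterate_derivative_prod_X_add_C s (by omega),
    eval_zero_iterate_derivative_prod_X_add_C s (by omega),
    show card s - j = k + 2 by omega, show card s - (j + 1) = k + 1 by omega,
    show card s - (j + 1 + 1) = k by omega] at key
  linarith

theorem esymm_mul_esymm_nonpos_of_esymm_eq_zero (s : Multiset ℝ) {k : ℕ}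
    (hk : s.esymm (k + 1) = 0) : s.esymm k * s.esymm (k + 2) ≤ 0 := by
  rcases lt_or_ge (card s) (k + 2) with hs | hs
  · rw [esymm_eq_zero_of_card_lt s hs, mul_zero]
  · have newton := factorial_mul_esymm_mul_esymm_le s (j := card s - (k + 2)) (k := k) (by omega)
    rw [hk] at newton
    have hfac : (0 : ℝ) < (card s - (k + 2)).factorial * (card s - (k + 2) + 2).factorial := by
      positivity
    nlinarith

theorem esymm_pos_of_esymm_cons_pos {a : ℝ} {s : Multiset ℝ} {m : ℕ}
    (h : ∀ j ≤ m, 0 < (a ::ₘ s).esymm j) : ∀ k < m, 0 < s.esymm k := by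
  intro k
  induction k using Nat.strong_induction_on with | _ k ih => ?_
  intro hk
  rcases k with _ | k
  · simp
  by_contra! hneg
  have hpos : 0 < s.esymm k := ih k (by omega) (by omega)
  set t := -s.esymm (k + 1) / s.esymm k
  have ht : s.esymm (k + 1) + t * s.esymm k = 0 := by
    rw [div_mul_cancel₀ _ hpos.ne']; ring
  have hta : t < a := by
    have ha := h (k + 1) (by omega)
    rw [esymm_cons_succ] at ha
    nlinarith
  have hzero : (t ::ₘ s).esymm (k + 1) = 0 := by rw [esymm_cons_succ, ht]
  have hprev : 0 < (t ::ₘ s).esymm k := by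
    rcases k with _ | k
    · simp
    rw [esymm_cons_succ]
    have hpos' := ih k (by omega) (by omega)
    have ht0 : 0 ≤ t := div_nonneg (by linarith) hpos.le
    positivity
  have hnext : 0 < (t ::ₘ s).esymm (k + 2) := by
    have ha := h (k + 2) (by omega)
    rw [esymm_cons_succ] at ha ⊢
    nlinarith
  exact (esymm_mul_esymm_nonpos_of_esymm_eq_zero _ hzero).not_gt (mul_pos hprev hnext)

theorem esymm_pos_of_esymm_add_pos {d s : Multiset ℝ} {m : ℕ}
    (h : ∀ j ≤ m, 0 < (d + s).esymm j) {k : ℕ} (hk : k + card d ≤ m) : 0 < s.esymm k := by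
  induction d using Multiset.induction_on generalizing m with
  | empty => simpa using h k (by simpa using hk)
  | cons a d ih =>
    rw [card_cons] at hk
    rw [cons_add] at h
    exact ih (m := m - 1) (fun j hj => esymm_pos_of_esymm_cons_pos h j (by omega)) (by omega)

end Multiset

theorem stmt0_general (n m : ℕ) (lam : Fin n → ℝ)
    (hlam : lam ∈ GammaCone n m) (I : Finset (Fin n)) (k : ℕ)
    (hk : k + I.card ≤ m) :
    0 < SRes n (Finset.univ \ I) k lam := by
  have hsplit : univ.val.map lam = I.val.map lam + (univ \ I).val.map lam := by
    rw [← Multiset.map_add, sdiff_val, add_tsub_cancel_of_le (val_le_iff.mpr I.subset_univ)]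
  rw [SRes, ← esymm_map_val]
  refine Multiset.esymm_pos_of_esymm_add_pos (d := I.val.map lam) (m := m) (fun j hj => ?_)
    (by simpa using hk)
  rw [← hsplit, esymm_map_val]
  rcases j.eq_zero_or_pos with rfl | hj0
  · simp
  · exact hlam j hj0 hj

theorem stmt0 (n m : ℕ) (hm : 1 ≤ m) (hmn : m ≤ n) (lam : Fin n → ℝ)
    (hlam : lam ∈ GammaCone n m) (I : Finset (Fin n)) (k : ℕ)
    (hk : k + I.card ≤ m) :
    0 < SRes n (Finset.univ \ I) k lam :=
  stmt0_general n m lam hlam I k hk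
end

section
/- If λ ∈ Γ_m (m ≥ 2), then at least m of the coordinates λ_1, …, λ_n are strictly positive. -/
open Finset

lemma SRes_zero (n : ℕ) (T : Finset (Fin n)) (lam : Fin n → ℝ) : SRes n T 0 lam = 1 := by
  simp [SRes]

lemma SRes_insert (n : ℕ) (T : Finset (Fin n)) (i : Fin n) (hi : i ∉ T) (k : ℕ)
    (lam : Fin n → ℝ) :
    SRes n (insert i T) (k + 1) lam = SRes n T (k + 1) lam + lam i * SRes n T k lam := by
  unfold SRes
  rw [Finset.powersetCard_succ_insert hi k, Finset.sum_union]
  · congr 1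
    rw [Finset.sum_image, Finset.mul_sum]
    · refine Finset.sum_congr rfl fun A hA => ?_
      have hiA : i ∉ A := fun h => hi ((Finset.mem_powersetCard.mp hA).1 h)
      rw [Finset.prod_insert hiA]
    · intro A hA B hB h
      have hiA : i ∉ A := fun h' => hi ((Finset.mem_powersetCard.mp hA).1 h')
      have hiB : i ∉ B := fun h' => hi ((Finset.mem_powersetCard.mp hB).1 h')
      have h2 := congrArg (fun s => Finset.erase s i) h
      simpa [Finset.erase_insert hiA, Finset.erase_insert hiB] using h2
  · rw [Finset.disjoint_right]
    intro A hA hA'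
    obtain ⟨B, hB, rfl⟩ := Finset.mem_image.mp hA
    exact hi ((Finset.mem_powersetCard.mp hA').1 (Finset.mem_insert_self i B))

/-- Removing a nonpositive coordinate preserves positivity of the restricted
elementary symmetric functions. -/
lemma removal (n m : ℕ) (lam : Fin n → ℝ) (T : Finset (Fin n)) (i : Fin n) (hi : i ∈ T)
    (hneg : lam i ≤ 0) (hyp : ∀ k, 1 ≤ k → k ≤ m → 0 < SRes n T k lam) :
    ∀ k, k ≤ m → 0 < SRes n (T.erase i) k lam := by
  intro k
  induction k with
  | zero => intro _; rw [SRes_zero]; norm_num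
  | succ k ih =>
    intro hk
    have h1 := SRes_insert n (T.erase i) i (Finset.notMem_erase i T) k lam
    rw [Finset.insert_erase hi] at h1
    have h2 := hyp (k + 1) (by omega) hk
    have h3 := ih (by omega)
    nlinarith

lemma key (n m : ℕ) (hm : 1 ≤ m) (lam : Fin n → ℝ) :
    ∀ N (T : Finset (Fin n)), T.card = N → m ≤ N →
      (∀ k, 1 ≤ k → k ≤ m → 0 < SRes n T k lam) →
      m ≤ (T.filter fun i => 0 < lam i).card := by
  intro N
  induction N with
  | zero => intro T _ hmN _; omega
  | succ N ih =>
    intro T hcard hmN hyp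
    by_cases hall : ∀ i ∈ T, 0 < lam i
    · rwa [Finset.filter_true_of_mem hall, hcard]
    · push_neg at hall
      obtain ⟨i, hi, hneg⟩ := hall
      by_cases hNm : m ≤ N
      · -- erase i and use the inductive hypothesis
        have hT' : (T.erase i).card = N := by
          rw [Finset.card_erase_of_mem hi, hcard]; omega
        have hyp' : ∀ k, 1 ≤ k → k ≤ m → 0 < SRes n (T.erase i) k lam :=
          fun k _ hk => removal n m lam T i hi hneg hyp k hk
        have := ih (T.erase i) hT' hNm hyp'
        calc m ≤ ((T.erase i).filter fun j => 0 < lam j).card := this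
          _ ≤ (T.filter fun j => 0 < lam j).card :=
            Finset.card_le_card (Finset.filter_subset_filter _ (Finset.erase_subset i T))
      · -- T.card = m : derive a contradiction
        exfalso
        have hNm' : m = N + 1 := by omega
        have h1 : 0 < SRes n T m lam := hyp m hm le_rfl
        have hTm : T.card = m := by omega
        have hSm : SRes n T m lam = ∏ j ∈ T, lam j := by
          unfold SRes
          rw [← hTm, Finset.powersetCard_self, Finset.sum_singleton]
        have hT'c : (T.erase i).card = m - 1 := by
          rw [Finset.card_erase_of_mem hi, hTm]
        have hSm' : SRes n (T.erase i) (m - 1) lam = ∏ j ∈ T.erase i, lam j := by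
          unfold SRes
          rw [← hT'c, Finset.powersetCard_self, Finset.sum_singleton]
        have h4 : 0 < SRes n (T.erase i) (m - 1) lam :=
          removal n m lam T i hi hneg hyp (m - 1) (by omega)
        rw [hSm'] at h4
        rw [hSm, ← Finset.mul_prod_erase T lam hi] at h1
        nlinarith

theorem stmt1 (n m : ℕ) (hm : 2 ≤ m) (hmn : m ≤ n) (lam : Fin n → ℝ)
    (hlam : lam ∈ GammaCone n m) :
    m ≤ (Finset.univ.filter fun i => 0 < lam i).card := by
  have hcard : (Finset.univ : Finset (Fin n)).card = n := by simp
  exact key n m (by omega) lam n Finset.univ hcard hmn (fun k h1 h2 => hlam k h1 h2)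
end

section
/- (Iteration lemma for sublevel volumes) Let ε_B > 0, C > 0, mα > 0, and let a : (0, ε_B) → [0, ∞) be a function which is left-continuous, nondecreasing, with a(x) > 0 for x > 0 and lim_{x→0⁺} a(x) ≥ 0, satisfying: for all s, t ∈ (0, ε_B) with s + t < ε_B, t · a(s) ≤ C · a(s+t)^{1+mα}. Then for every s ∈ (0, ε_B): s ≤ (2^{1+mα}/(2^{mα} − 1)) · C · a(s)^{mα}. -/
theorem stmt11 (εB C β : ℝ) (hεB : 0 < εB) (hC : 0 < C) (hβ : 0 < β)
    (a : ℝ → ℝ) (hnn : ∀ x, 0 ≤ a x)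
    (hmono : ∀ s t, 0 < s → s ≤ t → t < εB → a s ≤ a t)
    (hpos : ∀ s, 0 < s → s < εB → 0 < a s)
    (hlc : ∀ s, 0 < s → s < εB →
      Filter.Tendsto a (nhdsWithin s (Set.Iio s)) (nhds (a s)))
    (hkey : ∀ s t, 0 < s → 0 < t → s + t < εB →
      t * a s ≤ C * (a (s + t)) ^ (1 + β)) :
    ∀ s, 0 < s → s < εB →
      s ≤ (2 ^ (1 + β) / (2 ^ β - 1)) * C * (a s) ^ β := by
  have h2β : (1:ℝ) < 2 ^ β :=
    (Real.one_lt_rpow_iff_of_pos (by norm_num)).2 (Or.inl ⟨by norm_num, hβ⟩)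
  have h2βpos : (0:ℝ) < 2 ^ β := lt_trans one_pos h2β
  set r : ℝ := ((2:ℝ) ^ β)⁻¹ with hr
  have hr0 : 0 < r := by positivity
  have hr1 : r < 1 := by
    rw [hr, inv_lt_one_iff₀]; right; exact h2β
  intro s₀ hs₀ hs₀ε
  set T : ℝ → Set ℝ := fun s => {x | 0 < x ∧ x ≤ s ∧ 2 * a x ≤ a s} with hT
  set u : ℝ → ℝ := fun s => sSup (T s) with hu
  have hbdd : ∀ s, BddAbove (T s) := fun s => ⟨s, fun x hx => hx.2.1⟩
  have hu_nonneg : ∀ s, 0 ≤ u s := by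
    intro s
    rcases Set.eq_empty_or_nonempty (T s) with h | ⟨x, hx⟩
    · simp [hu, h, Real.sSup_empty]
    · exact le_trans hx.1.le (le_csSup (hbdd s) hx)
  have hu_le : ∀ s, 0 ≤ s → u s ≤ s := by
    intro s hs
    rcases Set.eq_empty_or_nonempty (T s) with h | hne
    · simp [hu, h, Real.sSup_empty, hs]
    · exact csSup_le hne (fun x hx => hx.2.1)
  have hu_zero : u 0 = 0 := by
    have he : T 0 = ∅ := by
      ext x; simp only [hT, Set.mem_setOf_eq, Set.mem_empty_iff_false, iff_false]
      rintro ⟨h1, h2, -⟩; linarith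
    simp [hu, he, Real.sSup_empty]
  -- step inequality (i)
  have step1 : ∀ s, 0 < s → s < εB → s ≤ u s + 2 * C * a s ^ β := by
    intro s hs hsε
    by_contra hcon
    push_neg at hcon
    set B := 2 * C * a s ^ β with hB
    have haspos : 0 < a s := hpos s hs hsε
    have hB0 : 0 ≤ B := by positivity
    have hus : u s < s - B := by linarith
    set x := (u s + (s - B)) / 2 with hx
    have hx1 : u s < x := by rw [hx]; linarith
    have hx2 : x < s - B := by rw [hx]; linarith
    have hx0 : 0 < x := lt_of_le_of_lt (hu_nonneg s) hx1
    have hxs : x < s := by linarith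
    have hxT : x ∉ T s := fun h => absurd (le_csSup (hbdd s) h) (not_le.2 hx1)
    have hax : a s < 2 * a x := by
      by_contra h
      exact hxT ⟨hx0, hxs.le, not_lt.1 h⟩
    have hk := hkey x (s - x) hx0 (by linarith) (by rw [add_sub_cancel]; exact hsε)
    rw [add_sub_cancel, Real.rpow_add haspos, Real.rpow_one] at hk
    -- (s - x) * a x ≤ C * (a s * a s ^ β)
    have h1 : (s - x) * (a s / 2) ≤ C * (a s * a s ^ β) := by
      refine le_trans ?_ hk
      have : a s / 2 ≤ a x := by linarith
      nlinarith [hnn x]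
    have h2 : s - x ≤ B := by
      rw [hB]
      nlinarith [h1, haspos, hnn x]
    linarith
  -- step inequality (ii)
  have step2 : ∀ s, 0 < s → s < εB → 0 < u s → 2 * a (u s) ≤ a s := by
    intro s hs hsε hus
    have hne : (T s).Nonempty := by
      by_contra h
      rw [Set.not_nonempty_iff_eq_empty] at h
      rw [hu] at hus; simp only at hus
      rw [h, Real.sSup_empty] at hus; exact lt_irrefl 0 hus
    have husεB : u s < εB := lt_of_le_of_lt (hu_le s hs.le) hsε
    have hev : ∀ᶠ x in nhdsWithin (u s) (Set.Iio (u s)), a x ≤ a s / 2 := by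
      have h1 : ∀ᶠ x in nhdsWithin (u s) (Set.Iio (u s)), x ∈ Set.Iio (u s) :=
        self_mem_nhdsWithin
      have h2 : ∀ᶠ x in nhdsWithin (u s) (Set.Iio (u s)), 0 < x := by
        apply Filter.Eventually.filter_mono nhdsWithin_le_nhds
        exact eventually_nhds_iff.2 ⟨Set.Ioi 0, fun y hy => hy, isOpen_Ioi, hus⟩
      filter_upwards [h1, h2] with x hx1 hx2
      obtain ⟨y, hyT, hxy⟩ := exists_lt_of_lt_csSup hne hx1
      have : a x ≤ a y := hmono x y hx2 hxy.le (lt_of_le_of_lt hyT.2.1 hsε)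
      linarith [hyT.2.2]
    have := le_of_tendsto (hlc (u s) hus husεB) hev
    linarith
  -- the iterated sequence
  set f : ℕ → ℝ := fun n => u^[n] s₀ with hf
  have hfsucc : ∀ n, f (n + 1) = u (f n) := by
    intro n; rw [hf]; simp [Function.iterate_succ_apply']
  have hf0 : f 0 = s₀ := rfl
  have hf_nonneg : ∀ n, 0 ≤ f n := by
    intro n; induction n with
    | zero => exact hs₀.le
    | succ n ih => rw [hfsucc]; exact hu_nonneg _
  have hf_le : ∀ n, f n ≤ s₀ := by
    intro n; induction n with
    | zero => exact le_refl _
    | succ n ih => rw [hfsucc]; exact le_trans (hu_le _ (hf_nonneg n)) ih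
  have hf_lt : ∀ n, f n < εB := fun n => lt_of_le_of_lt (hf_le n) hs₀ε
  -- halving of a along the sequence
  have hhalf : ∀ n, f n = 0 ∨ (0 < f n ∧ 2 ^ n * a (f n) ≤ a s₀) := by
    intro n; induction n with
    | zero => right; exact ⟨hs₀, by rw [hf0]; norm_num⟩
    | succ n ih =>
      rcases ih with h | ⟨h1, h2⟩
      · left; rw [hfsucc, h, hu_zero]
      · rcases eq_or_lt_of_le (hu_nonneg (f n)) with h' | h'
        · left; rw [hfsucc, ← h']
        · right
          refine ⟨by rw [hfsucc]; exact h', ?_⟩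
          have := step2 (f n) h1 (hf_lt n) h'
          rw [hfsucc]
          calc 2 ^ (n+1) * a (u (f n)) = 2 ^ n * (2 * a (u (f n))) := by ring
            _ ≤ 2 ^ n * a (f n) :=
                mul_le_mul_of_nonneg_left this (by positivity : (0:ℝ) ≤ 2 ^ n)
            _ ≤ a s₀ := h2
  -- telescoping bound
  set D := 2 * C * a s₀ ^ β with hD
  have hD0 : 0 ≤ D := mul_nonneg (by positivity) (Real.rpow_nonneg (hnn s₀) β)
  have htel : ∀ n, s₀ - f n ≤ D * (1 - r ^ n) / (1 - r) := by
    intro n; induction n with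
    | zero => simp [hf0]
    | succ n ih =>
      rcases hhalf n with h | ⟨h1, h2⟩
      · have hf1 : f (n + 1) = 0 := by rw [hfsucc, h, hu_zero]
        have hrpow : r ^ (n + 1) ≤ r ^ n :=
          pow_le_pow_of_le_one hr0.le hr1.le (Nat.le_succ n)
        have h1r : (0:ℝ) < 1 - r := by linarith
        have hmon : D * (1 - r ^ n) / (1 - r) ≤ D * (1 - r ^ (n + 1)) / (1 - r) := by
          rw [div_eq_mul_inv, div_eq_mul_inv]
          exact mul_le_mul_of_nonneg_right (by nlinarith) (by positivity)
        rw [hf1]; rw [h] at ih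
        linarith
      · -- f n - f (n+1) ≤ D * r ^ n
        have hstep : f n - f (n + 1) ≤ D * r ^ n := by
          have h3 := step1 (f n) h1 (hf_lt n)
          rw [← hfsucc] at h3
          have hafn : a (f n) ^ β ≤ a s₀ ^ β * r ^ n := by
            have hle : a (f n) ≤ a s₀ / 2 ^ n := by
              rw [le_div_iff₀ (by positivity : (0:ℝ) < 2 ^ n)]
              linarith
            calc a (f n) ^ β ≤ (a s₀ / 2 ^ n) ^ β :=
                  Real.rpow_le_rpow (hnn _) hle hβ.le
              _ = a s₀ ^ β * r ^ n := by
                  have hpp : ((2:ℝ) ^ n) ^ β = ((2:ℝ) ^ β) ^ n := by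
                    rw [← Real.rpow_natCast (2:ℝ) n, ← Real.rpow_natCast ((2:ℝ) ^ β) n,
                      ← Real.rpow_mul (by norm_num : (0:ℝ) ≤ 2),
                      ← Real.rpow_mul (by norm_num : (0:ℝ) ≤ 2), mul_comm]
                  rw [Real.div_rpow (hnn _) (by positivity), div_eq_mul_inv, hpp, hr, inv_pow]
          have : 2 * C * a (f n) ^ β ≤ D * r ^ n := by
            rw [hD]
            calc 2 * C * a (f n) ^ β ≤ 2 * C * (a s₀ ^ β * r ^ n) := by
                  apply mul_le_mul_of_nonneg_left hafn (by positivity)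
              _ = 2 * C * a s₀ ^ β * r ^ n := by ring
          linarith
        have key : D * (1 - r ^ n) / (1 - r) + D * r ^ n ≤ D * (1 - r ^ (n+1)) / (1 - r) := by
          have h1r : (0:ℝ) < 1 - r := by linarith
          have heq : D * (1 - r ^ n) / (1 - r) + D * r ^ n
              = D * (1 - r ^ (n+1)) / (1 - r) := by
            field_simp
            ring
          exact le_of_eq heq
        calc s₀ - f (n + 1) = (s₀ - f n) + (f n - f (n + 1)) := by ring
          _ ≤ D * (1 - r ^ n) / (1 - r) + D * r ^ n := add_le_add ih hstep
          _ ≤ D * (1 - r ^ (n+1)) / (1 - r) := key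
  -- conclude
  have hbound : ∀ n, s₀ ≤ f n + D / (1 - r) := by
    intro n
    have h1 := htel n
    have h2 : D * (1 - r ^ n) / (1 - r) ≤ D / (1 - r) := by
      have hpn : 0 ≤ r ^ n := pow_nonneg hr0.le n
      have h1r : (0:ℝ) < 1 - r := by linarith
      rw [div_eq_mul_inv, div_eq_mul_inv]
      exact mul_le_mul_of_nonneg_right (by nlinarith) (by positivity)
    linarith
  have hεsmall : ∀ ε, 0 < ε → s₀ ≤ D / (1 - r) + ε := by
    intro ε hε
    rcases le_or_gt s₀ ε with h | h
    · have h1r : (0:ℝ) < 1 - r := by linarith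
      have : 0 ≤ D / (1 - r) := by positivity
      linarith
    · -- ε < s₀, so ε < εB and a ε > 0
      have hεεB : ε < εB := lt_trans h hs₀ε
      have haε : 0 < a ε := hpos ε hε hεεB
      obtain ⟨n, hn⟩ := pow_unbounded_of_one_lt (a s₀ / a ε) (by norm_num : (1:ℝ) < 2)
      have hfn : f n ≤ ε := by
        by_contra hcon
        push_neg at hcon
        rcases hhalf n with h' | ⟨h1, h2⟩
        · rw [h'] at hcon; linarith
        · have : a ε ≤ a (f n) := hmono ε (f n) hε hcon.le (hf_lt n)
          have h2n : (0:ℝ) ≤ 2 ^ n := by positivity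
          have : 2 ^ n * a ε ≤ a s₀ := le_trans (by nlinarith) h2
          rw [div_lt_iff₀ haε] at hn
          nlinarith
      linarith [hbound n]
  have hfinal : s₀ ≤ D / (1 - r) := le_of_forall_pos_le_add hεsmall
  -- arithmetic: D / (1 - r) = (2 ^ (1 + β) / (2 ^ β - 1)) * C * a s₀ ^ β
  have harith : D / (1 - r) = (2 ^ (1 + β) / (2 ^ β - 1)) * C * a s₀ ^ β := by
    rw [hD, hr, Real.rpow_add (by norm_num : (0:ℝ) < 2), Real.rpow_one]
    have h1 : (2:ℝ) ^ β ≠ 0 := ne_of_gt h2βpos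
    have h2 : (2:ℝ) ^ β - 1 ≠ 0 := by intro h; apply absurd h2β; rw [sub_eq_zero] at h; simp [← h]
    field_simp
  rw [← harith]
  exact hfinal
end
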